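/- arXiv:1602.01029 — 2 statements merged into one kernel-verified Lean document; each statement's English description precedes it below -/
import Mathlib

section
/- A simple connected graph G satisfies the doubling condition (there exists K with |B(x,2r)| ≤ K|B(x,r)| for all vertices x and all real r > 0) if and only if both the maximum degree Δ_G and the 2-dilation index D_2(G) (over natural radii) are finite. -/
open scoped ENNReal

noncomputable def ballCard {V : Type*} (G : SimpleGraph V) (x : V) (r : ℕ) : ℕ :=
  {y | G.dist x y ≤ r}.ncard

noncomputable def dil {V : Type*} (G : SimpleGraph V) (k : ℕ) : ℝ≥0∞ :=
  ⨆ (x : V) (r : ℕ), (ballCard G x (k * r) : ℝ≥0∞) / (ballCard G x r : ℝ≥0∞)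

noncomputable def maxDeg {V : Type*} (G : SimpleGraph V) : ℝ≥0∞ :=
  ⨆ x : V, ((G.neighborSet x).ncard : ℝ≥0∞)

section Helpers
variable {V : Type*} {G : SimpleGraph V}

lemma ball_finite (hconn : G.Connected) (hloc : ∀ x : V, (G.neighborSet x).Finite)
    (x : V) : ∀ r : ℕ, {y | G.dist x y ≤ r}.Finite := by
  intro r
  induction r with
  | zero =>
    have : {y | G.dist x y ≤ 0} = {x} := by
      ext y
      simp [Nat.le_zero, hconn.dist_eq_zero_iff, eq_comm]
    rw [this]; exact Set.finite_singleton x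
  | succ n ih =>
    have hsub : {y | G.dist x y ≤ n + 1} ⊆
        {y | G.dist x y ≤ n} ∪ ⋃ z ∈ {y | G.dist x y ≤ n}, G.neighborSet z := by
      intro y hy
      by_cases h : G.dist x y ≤ n
      · exact Or.inl h
      · have hd : G.dist x y = n + 1 := le_antisymm hy (by omega)
        obtain ⟨p, hp⟩ := (hconn y x).exists_walk_length_eq_dist
        rw [SimpleGraph.dist_comm, hd] at hp
        cases p with
        | nil => simp at hp
        | cons hadj q =>
          rename_i z
          right
          have hz : G.dist x z ≤ n := by
            rw [SimpleGraph.dist_comm]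
            have := SimpleGraph.dist_le q
            simp at hp
            omega
          exact Set.mem_biUnion hz hadj.symm
    exact ((ih.union (ih.biUnion fun z _ => hloc z))).subset hsub

lemma ballCard_pos (hconn : G.Connected) (hloc : ∀ x : V, (G.neighborSet x).Finite)
    (x : V) (r : ℕ) : 0 < ballCard G x r := by
  rw [ballCard, Set.ncard_pos (ball_finite hconn hloc x r)]
  exact ⟨x, by simp [SimpleGraph.dist_self]⟩

lemma ballCard_mono (hconn : G.Connected) (hloc : ∀ x : V, (G.neighborSet x).Finite)
    (x : V) {r s : ℕ} (h : r ≤ s) : ballCard G x r ≤ ballCard G x s :=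
  Set.ncard_le_ncard (fun y hy => le_trans hy h) (ball_finite hconn hloc x s)

lemma ballCard_zero (hconn : G.Connected) (x : V) : ballCard G x 0 = 1 := by
  have : {y | G.dist x y ≤ 0} = {x} := by
    ext y
    simp [Nat.le_zero, hconn.dist_eq_zero_iff, eq_comm]
  rw [ballCard, this, Set.ncard_singleton]

lemma ballCard_succ_le (hconn : G.Connected) (hloc : ∀ x : V, (G.neighborSet x).Finite)
    {D : ℕ} (hD : ∀ x : V, (G.neighborSet x).ncard ≤ D) (x : V) (n : ℕ) :
    ballCard G x (n + 1) ≤ (D + 1) * ballCard G x n := by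
  classical
  have hfin := ball_finite hconn hloc x
  set s : Finset V := (hfin n).toFinset with hs
  set t : Finset V := s.biUnion (fun z => insert z (hloc z).toFinset) with ht
  have hsub : {y | G.dist x y ≤ n + 1} ⊆ ↑t := by
    intro y hy
    by_cases h : G.dist x y ≤ n
    · have hy' : y ∈ s := by simpa [hs, Set.Finite.mem_toFinset] using h
      exact Finset.mem_coe.mpr (Finset.mem_biUnion.mpr ⟨y, hy', Finset.mem_insert_self _ _⟩)
    · have hd : G.dist x y = n + 1 := le_antisymm hy (by omega)
      obtain ⟨p, hp⟩ := (hconn y x).exists_walk_length_eq_dist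
      rw [SimpleGraph.dist_comm, hd] at hp
      cases p with
      | nil => simp at hp
      | cons hadj q =>
        rename_i z
        have hz : G.dist x z ≤ n := by
          rw [SimpleGraph.dist_comm]
          have := SimpleGraph.dist_le q
          simp at hp
          omega
        have hz' : z ∈ s := by simpa [hs, Set.Finite.mem_toFinset] using hz
        refine Finset.mem_coe.mpr (Finset.mem_biUnion.mpr ⟨z, hz', ?_⟩)
        exact Finset.mem_insert_of_mem (by simpa [Set.Finite.mem_toFinset] using hadj.symm)
  have h1 : ballCard G x (n + 1) ≤ t.card := by
    rw [ballCard, ← Set.ncard_coe_finset t]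
    exact Set.ncard_le_ncard hsub t.finite_toSet
  have h2 : t.card ≤ ∑ z ∈ s, (insert z (hloc z).toFinset).card := Finset.card_biUnion_le
  have h3 : ∀ z ∈ s, (insert z (hloc z).toFinset).card ≤ D + 1 := by
    intro z _
    calc (insert z (hloc z).toFinset).card ≤ (hloc z).toFinset.card + 1 :=
          Finset.card_insert_le _ _
      _ ≤ D + 1 := by
          have := hD z
          rw [Set.ncard_eq_toFinset_card _ (hloc z)] at this
          omega
  have h4 : ∑ z ∈ s, (insert z (hloc z).toFinset).card ≤ s.card * (D + 1) := by
    calc ∑ z ∈ s, (insert z (hloc z).toFinset).card ≤ ∑ _z ∈ s, (D + 1) :=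
          Finset.sum_le_sum h3
      _ = s.card * (D + 1) := by rw [Finset.sum_const, smul_eq_mul]
  have h5 : s.card = ballCard G x n := (Set.ncard_eq_toFinset_card _ (hfin n)).symm
  calc ballCard G x (n + 1) ≤ s.card * (D + 1) := le_trans h1 (le_trans h2 h4)
    _ = (D + 1) * ballCard G x n := by rw [h5, Nat.mul_comm]

end Helpers

theorem stmt2 {V : Type*} (G : SimpleGraph V) (hconn : G.Connected)
    (hloc : ∀ x : V, (G.neighborSet x).Finite) (hV : Infinite V) :
    (∃ K : ℝ, ∀ (x : V) (r : ℝ), 0 < r →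
        (ballCard G x ⌊2 * r⌋₊ : ℝ) ≤ K * (ballCard G x ⌊r⌋₊ : ℝ)) ↔
      (maxDeg G < ⊤ ∧ dil G 2 < ⊤) := by
  classical
  constructor
  · rintro ⟨K, hK⟩
    have hdegK : ∀ x : V, ((G.neighborSet x).ncard : ℝ) + 1 ≤ K := by
      intro x
      have h := hK x (1/2) (by norm_num)
      have e1 : ⌊2 * (1/2 : ℝ)⌋₊ = 1 := by norm_num
      have e2 : ⌊(1/2 : ℝ)⌋₊ = 0 := by rw [Nat.floor_eq_zero]; norm_num
      rw [e1, e2, ballCard_zero hconn] at h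
      have hsub : insert x (G.neighborSet x) ⊆ {y | G.dist x y ≤ 1} := by
        rintro y (rfl | hy)
        · simp [SimpleGraph.dist_self]
        · have : G.dist x y = 1 := SimpleGraph.dist_eq_one_iff_adj.mpr hy
          simp [this]
      have hcard : (G.neighborSet x).ncard + 1 ≤ ballCard G x 1 := by
        have h1 : (insert x (G.neighborSet x)).ncard ≤ ballCard G x 1 :=
          Set.ncard_le_ncard hsub (ball_finite hconn hloc x 1)
        rw [Set.ncard_insert_of_notMem G.notMem_neighborSet_self (hloc x)] at h1
        omega
      have h2 : ((G.neighborSet x).ncard : ℝ) + 1 ≤ (ballCard G x 1 : ℝ) := by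
        exact_mod_cast hcard
      rw [Nat.cast_one, mul_one] at h
      linarith
    constructor
    · refine lt_of_le_of_lt (iSup_le fun x => ?_) (ENNReal.ofReal_lt_top (r := K))
      calc ((G.neighborSet x).ncard : ℝ≥0∞)
          = ENNReal.ofReal ((G.neighborSet x).ncard : ℝ) := (ENNReal.ofReal_natCast _).symm
        _ ≤ ENNReal.ofReal K := ENNReal.ofReal_le_ofReal (by linarith [hdegK x])
    · refine lt_of_le_of_lt ?_ (ENNReal.ofReal_lt_top (r := max K 1))
      refine iSup_le fun x => iSup_le fun r => ?_
      rcases Nat.eq_zero_or_pos r with rfl | hr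
      · rw [Nat.mul_zero, ballCard_zero hconn, Nat.cast_one, div_one,
          ← ENNReal.ofReal_one]
        exact ENNReal.ofReal_le_ofReal (le_max_right _ _)
      · have h := hK x (r : ℝ) (by exact_mod_cast hr)
        have e1 : ⌊2 * (r : ℝ)⌋₊ = 2 * r := by
          rw [show (2:ℝ) * (r:ℝ) = ((2 * r : ℕ) : ℝ) by push_cast; ring, Nat.floor_natCast]
        have e2 : ⌊(r : ℝ)⌋₊ = r := Nat.floor_natCast r
        rw [e1, e2] at h
        have hne0 : (ballCard G x r : ℝ≥0∞) ≠ 0 :=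
          Nat.cast_ne_zero.mpr (ballCard_pos hconn hloc x r).ne'
        rw [ENNReal.div_le_iff hne0 (ENNReal.natCast_ne_top _)]
        calc (ballCard G x (2 * r) : ℝ≥0∞)
            = ENNReal.ofReal (ballCard G x (2 * r) : ℝ) := (ENNReal.ofReal_natCast _).symm
          _ ≤ ENNReal.ofReal (max K 1 * (ballCard G x r : ℝ)) := by
              refine ENNReal.ofReal_le_ofReal (le_trans h ?_)
              exact mul_le_mul_of_nonneg_right (le_max_left _ _) (Nat.cast_nonneg _)
          _ = ENNReal.ofReal (max K 1) * ENNReal.ofReal ((ballCard G x r : ℝ)) :=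
              ENNReal.ofReal_mul (le_trans zero_le_one (le_max_right _ _))
          _ = ENNReal.ofReal (max K 1) * (ballCard G x r : ℝ≥0∞) := by
              rw [ENNReal.ofReal_natCast]
  · rintro ⟨hΔ, hD⟩
    obtain ⟨D, hDgt⟩ := ENNReal.exists_nat_gt hΔ.ne
    have hdeg : ∀ x : V, (G.neighborSet x).ncard ≤ D := by
      intro x
      have h : ((G.neighborSet x).ncard : ℝ≥0∞) < (D : ℕ) :=
        lt_of_le_of_lt (le_iSup (fun x => (((G.neighborSet x).ncard : ℝ≥0∞))) x) hDgt
      exact_mod_cast h.le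
    refine ⟨(dil G 2).toReal * (D + 1), fun x r hr => ?_⟩
    set n := ⌊r⌋₊ with hn
    have hfl : ⌊2 * r⌋₊ ≤ 2 * (n + 1) := by
      have h2 : 2 * r < ((2 * (n + 1) : ℕ) : ℝ) := by
        push_cast
        have := Nat.lt_floor_add_one r
        linarith
      exact ((Nat.floor_lt (by linarith)).mpr h2).le
    have m1 : ballCard G x ⌊2 * r⌋₊ ≤ ballCard G x (2 * (n + 1)) :=
      ballCard_mono hconn hloc x hfl
    have hne0 : (ballCard G x (n + 1) : ℝ≥0∞) ≠ 0 :=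
      Nat.cast_ne_zero.mpr (ballCard_pos hconn hloc x (n + 1)).ne'
    have hratio : (ballCard G x (2 * (n + 1)) : ℝ≥0∞) / (ballCard G x (n + 1) : ℝ≥0∞)
        ≤ dil G 2 :=
      le_iSup₂ (f := fun (x : V) (r : ℕ) =>
        (ballCard G x (2 * r) : ℝ≥0∞) / (ballCard G x r : ℝ≥0∞)) x (n + 1)
    have hdil : (ballCard G x (2 * (n + 1)) : ℝ≥0∞) ≤ dil G 2 * (ballCard G x (n + 1)) :=
      (ENNReal.div_le_iff hne0 (ENNReal.natCast_ne_top _)).mp hratio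
    have hreal : (ballCard G x (2 * (n + 1)) : ℝ) ≤
        (dil G 2).toReal * (ballCard G x (n + 1) : ℝ) := by
      have h := ENNReal.toReal_mono (ENNReal.mul_ne_top hD.ne (ENNReal.natCast_ne_top _)) hdil
      rwa [ENNReal.toReal_mul, ENNReal.toReal_natCast, ENNReal.toReal_natCast] at h
    have hstep : (ballCard G x (n + 1) : ℝ) ≤ (D + 1) * (ballCard G x n : ℝ) := by
      exact_mod_cast ballCard_succ_le hconn hloc hdeg x n
    calc (ballCard G x ⌊2 * r⌋₊ : ℝ) ≤ (ballCard G x (2 * (n + 1)) : ℝ) := by exact_mod_cast m1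
      _ ≤ (dil G 2).toReal * (ballCard G x (n + 1) : ℝ) := hreal
      _ ≤ (dil G 2).toReal * ((D + 1) * (ballCard G x n : ℝ)) :=
          mul_le_mul_of_nonneg_left hstep ENNReal.toReal_nonneg
      _ = (dil G 2).toReal * (D + 1) * (ballCard G x n : ℝ) := by ring
end

section
/- Distributional estimate for spherical averages: let G be an infinite connected graph with finite degrees and S_G(r) < ∞ for all r. Then there is an absolute constant c such that for every f ∈ L¹(G), every r ≥ 1 and λ > 0, |{x : A°_r f(x) ≥ λ}| ≤ c · Σ_{n≥0, 2^n ≤ 2 S_G(r)} 2^{3n/2} E_G(r) S_G(r)^{1/2} |{x : |f(x)| ≥ 2^{n−1} λ}|. -/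
open scoped ENNReal

noncomputable def sphereCard {V : Type*} (G : SimpleGraph V) (x : V) (r : ℕ) : ℕ :=
  {y | G.dist x y = r}.ncard

/-- The spherical averaging operator `A°_r`. -/
noncomputable def sphereAvg {V : Type*} (G : SimpleGraph V) (f : V → ℝ) (x : V) (r : ℕ) :
    ℝ≥0∞ :=
  (∑' z : {z : V // G.dist x z = r}, ENNReal.ofReal |f z.1|) / (sphereCard G x r : ℝ≥0∞)

/-- `S_G(r)`, the supremum of the sizes of the spheres of radius `r`. -/
noncomputable def SG {V : Type*} (G : SimpleGraph V) (r : ℕ) : ℕ :=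
  sSup (Set.range fun x : V => sphereCard G x r)

/-- The expander function `E_G(r)`. -/
noncomputable def expander {V : Type*} (G : SimpleGraph V) (r : ℕ) : ℝ≥0∞ :=
  ⨆ (A : Finset V) (_ : A.Nonempty) (B : Finset V) (_ : B.Nonempty),
    ((∑ x ∈ B, (((A : Set V) ∩ {y | G.dist x y = r}).ncard : ℝ≥0∞) /
        (sphereCard G x r : ℝ≥0∞)) ^ 2) / ((A.card : ℝ≥0∞) * (B.card : ℝ≥0∞))

/-!
Fix `λ`, let `L n = {x | |f x| ≥ 2 ^ (n - 1) λ}` and `m = ⌊log₂ (2 S_G(r))⌋`, so that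
`S_G(r) ≤ 2 ^ m ≤ 2 S_G(r)`. If `A°_r f x ≥ λ`, then either the sphere about `x` meets `L m`,
which puts `x` in the `r`-sphere of a point of `L m` (at most `|L m| S_G(r)` points), or, by the
layer-cake bound `|f| ≤ λ/2 + ∑_{n<m} 2 ^ (n - 1) λ 1_{L n}` on the sphere, some `L n` with
`n < m` fills a proportion `≥ w n` of it, where `∑_{n<m} 2 ^ n w n < 1`. Testing the definition of
`E_G(r)` on `A = L n` and the set `B` of such `x` gives `|B| ≤ E_G(r) |L n| / (w n)²`; the choice
`w n ≍ 2 ^ (-3n/4) S_G(r) ^ (-1/4)` makes this the `n`-th term of the claimed sum, and the first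
alternative is handled by `1 / S_G(r) ≤ E_G(r)` (take `A` a sphere and `B` its centre).
-/

namespace SimpleGraph

variable {V : Type*} {G : SimpleGraph V}

lemma Connected.exists_dist_eq_of_le (hconn : G.Connected) {x y : V} {k : ℕ}
    (hk : k ≤ G.dist x y) : ∃ z, G.dist x z = k ∧ G.dist z y = G.dist x y - k := by
  obtain ⟨p, hp⟩ := hconn.exists_walk_length_eq_dist x y
  have hxz : G.dist x (p.getVert k) ≤ k := (dist_le (p.take k)).trans (by simp)
  have hzy : G.dist (p.getVert k) y ≤ G.dist x y - k := (dist_le (p.drop k)).trans (by simp [hp])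
  have := hconn.dist_triangle (u := x) (v := p.getVert k) (w := y)
  exact ⟨p.getVert k, by omega, by omega⟩

lemma Connected.finite_setOf_dist_le (hconn : G.Connected)
    (hloc : ∀ x, (G.neighborSet x).Finite) (r : ℕ) (x : V) : {y | G.dist x y ≤ r}.Finite := by
  induction r with
  | zero =>
    refine (Set.finite_singleton x).subset fun y hy => ?_
    exact (hconn.dist_eq_zero_iff.mp (Nat.le_zero.mp hy)).symm
  | succ r ih =>
    refine (ih.union (ih.biUnion fun z _ => hloc z)).subset fun y (hy : G.dist x y ≤ r + 1) => ?_
    by_cases h : G.dist x y ≤ r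
    · exact Or.inl h
    · obtain ⟨z, hxz, hzy⟩ := hconn.exists_dist_eq_of_le (x := x) (y := y) (k := r) (by omega)
      exact Or.inr (Set.mem_biUnion hxz.le (dist_eq_one_iff_adj.mp (by omega)))

lemma Connected.finite_setOf_dist_eq (hconn : G.Connected)
    (hloc : ∀ x, (G.neighborSet x).Finite) (r : ℕ) (x : V) : {y | G.dist x y = r}.Finite :=
  (hconn.finite_setOf_dist_le hloc r x).subset fun _ hy => le_of_eq hy

lemma Connected.nonempty_setOf_dist_eq [Infinite V] (hconn : G.Connected)
    (hloc : ∀ x, (G.neighborSet x).Finite) (r : ℕ) (x : V) : {y | G.dist x y = r}.Nonempty := by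
  obtain ⟨y, hy⟩ := (hconn.finite_setOf_dist_le hloc r x).infinite_compl.nonempty
  obtain ⟨z, hz, -⟩ := hconn.exists_dist_eq_of_le (x := x) (y := y) (k := r) (le_of_not_ge hy)
  exact ⟨z, hz⟩

end SimpleGraph

section Numerics

open Finset

lemma encard_union_biUnion_le {α ι : Type*} (s : Set α) (I : Finset ι) (t : ι → Set α) :
    ((s ∪ ⋃ i ∈ I, t i).encard : ℝ≥0∞) ≤ s.encard + ∑ i ∈ I, ((t i).encard : ℝ≥0∞) := by
  rw [show ∑ i ∈ I, ((t i).encard : ℝ≥0∞) = ((∑ i ∈ I, (t i).encard : ℕ∞) : ℝ≥0∞) from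
    (map_sum ENat.toENNRealRingHom _ _).symm, ← ENat.toENNReal_add]
  exact ENat.toENNReal_mono ((Set.encard_union_le _ _).trans
    (add_le_add le_rfl (I.set_encard_biUnion_le _)))

lemma le_add_sum_ite_of_lt_two_pow_mul {t a : ℝ≥0∞} {m : ℕ} (h : t < 2 ^ m * a) :
    t ≤ a + ∑ n ∈ range m, if 2 ^ n * a ≤ t then 2 ^ n * a else 0 := by
  induction m generalizing a with
  | zero => simpa using h.le
  | succ m ih =>
    by_cases hat : a ≤ t
    -- peel off the `n = 0` term and apply the induction hypothesis at `2 * a`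
    · have hsplit := ih (a := 2 * a) (by rwa [← mul_assoc, ← pow_succ])
      rw [sum_range_succ', pow_zero, one_mul, if_pos hat]
      simp only [pow_succ, mul_assoc]
      exact hsplit.trans_eq (by ring)
    · exact (lt_of_not_ge hat).le.trans le_self_add

lemma geom_sum_add_le_mul_pow {α : Type*} [CommSemiring α] [PartialOrder α] [IsOrderedRing α]
    {q c : α} (hq : 0 ≤ q) (h : c + 1 ≤ c * q) (M : ℕ) :
    ∑ n ∈ range M, q ^ n + c ≤ c * q ^ M := by
  induction M with
  | zero => simp
  | succ M ih =>
    calc ∑ n ∈ range (M + 1), q ^ n + c = (∑ n ∈ range M, q ^ n + c) + q ^ M := by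
          rw [sum_range_succ]; ring
      _ ≤ c * q ^ M + q ^ M := by gcongr
      _ = (c + 1) * q ^ M := by ring
      _ ≤ c * q * q ^ M := by gcongr
      _ = c * q ^ (M + 1) := by ring

lemma sum_range_succ_log_le_tsum (T : ℕ → ℝ≥0∞) (K : ℕ) (hK : K ≠ 0) :
    ∑ n ∈ range (Nat.log 2 K + 1), T n ≤ ∑' n : {n : ℕ // 2 ^ n ≤ K}, T n := by
  have hmem : ∀ n ∈ range (Nat.log 2 K + 1), 2 ^ n ≤ K := fun n hn =>
    (Nat.pow_le_pow_right two_pos (Nat.lt_succ_iff.mp (mem_range.mp hn))).trans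
      (Nat.pow_log_le_self 2 hK)
  rw [← sum_subtype_of_mem T hmem]
  exact ENNReal.sum_le_tsum _

/-- The reciprocal `1 / w n` of the weights in the sketch above, written with natural powers of
`2 ^ (1/4)` and `S ^ (1/4)`. -/
noncomputable def dyadicWeight (S : ℝ≥0∞) (n : ℕ) : ℝ≥0∞ :=
  16 * (2 ^ (4⁻¹ : ℝ)) ^ (3 * n) * S ^ (4⁻¹ : ℝ)

lemma dyadicWeight_sq (S : ℝ≥0∞) (n : ℕ) :
    dyadicWeight S n ^ 2 = 256 * (2 : ℝ≥0∞) ^ ((3 * n : ℝ) / 2) * S ^ ((1 : ℝ) / 2) := by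
  have hrpow (x : ℝ≥0∞) (k : ℕ) (e : ℝ) (he : 4⁻¹ * k = e) : (x ^ (4⁻¹ : ℝ)) ^ k = x ^ e := by
    rw [← ENNReal.rpow_natCast, ← ENNReal.rpow_mul, he]
  rw [dyadicWeight, mul_pow, mul_pow, ← pow_mul, hrpow 2 (3 * n * 2) ((3 * n : ℝ) / 2)
    (by push_cast; ring), hrpow S 2 ((1 : ℝ) / 2) (by norm_num)]
  norm_num

lemma dyadicWeight_ne_zero {S : ℝ≥0∞} (hS : S ≠ 0) (n : ℕ) : dyadicWeight S n ≠ 0 := by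
  simp [dyadicWeight, hS]

lemma dyadicWeight_ne_top {S : ℝ≥0∞} (hS : S ≠ ⊤) (n : ℕ) : dyadicWeight S n ≠ ⊤ :=
  ENNReal.mul_ne_top (ENNReal.mul_ne_top ENNReal.ofNat_ne_top
    (ENNReal.pow_ne_top (ENNReal.rpow_ne_top_of_nonneg (by norm_num) ENNReal.ofNat_ne_top)))
    (ENNReal.rpow_ne_top_of_nonneg (by norm_num) hS)

lemma sum_two_pow_mul_inv_dyadicWeight_lt_one {S : ℝ≥0∞} (hS : S ≠ 0) (hST : S ≠ ⊤) {m : ℕ}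
    (hm : 2 ^ m ≤ 2 * S) : ∑ n ∈ range m, 2 ^ n * (dyadicWeight S n)⁻¹ < 1 := by
  set q : ℝ≥0∞ := 2 ^ (4⁻¹ : ℝ)
  set s : ℝ≥0∞ := S ^ (4⁻¹ : ℝ)
  have hq4 : q ^ 4 = 2 := by
    simpa using ENNReal.rpow_inv_natCast_pow four_ne_zero (2 : ℝ≥0∞)
  have hs4 : s ^ 4 = S := by simpa using ENNReal.rpow_inv_natCast_pow four_ne_zero S
  have hq0 : q ≠ 0 := by simp [q]
  have hqT : q ≠ ⊤ := by simp [q]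
  have hs0 : s ≠ 0 := by simp [s, hS]
  have hsT : s ≠ ⊤ := by simp [s, hST]
  have hq_le : q ≤ 2 := by
    rw [← ENNReal.pow_le_pow_left_iff four_ne_zero, hq4]
    norm_num
  have hq_ge : 6 + 1 ≤ 6 * q := by
    rw [← ENNReal.pow_le_pow_left_iff four_ne_zero, mul_pow, hq4]
    norm_num
  have hqm : q ^ m ≤ q * s := by
    rwa [← ENNReal.pow_le_pow_left_iff four_ne_zero, ← pow_mul, mul_comm m,
      pow_mul, hq4, mul_pow, hq4, hs4]
  have hterm (n : ℕ) : 2 ^ n * (dyadicWeight S n)⁻¹ = q ^ n / (16 * s) := by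
    have h2n : (2 : ℝ≥0∞) ^ n = q ^ (3 * n) * q ^ n := by
      rw [← pow_add, ← hq4, ← pow_mul]
      ring_nf
    rw [← div_eq_mul_inv, h2n]
    change q ^ (3 * n) * q ^ n / (16 * q ^ (3 * n) * s) = _
    rw [mul_comm 16, mul_assoc,
      ENNReal.mul_div_mul_left _ _ (pow_ne_zero _ hq0) (ENNReal.pow_ne_top hqT)]
  have hgeom : ∑ n ∈ range m, q ^ n ≤ 12 * s :=
    calc ∑ n ∈ range m, q ^ n ≤ ∑ n ∈ range m, q ^ n + 6 := le_self_add
      _ ≤ 6 * q ^ m := geom_sum_add_le_mul_pow zero_le hq_ge m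
      _ ≤ 6 * (2 * s) := by gcongr; exact hqm.trans (by gcongr)
      _ = 12 * s := by ring
  calc ∑ n ∈ range m, 2 ^ n * (dyadicWeight S n)⁻¹ = (∑ n ∈ range m, q ^ n) / (16 * s) := by
        simp only [hterm, div_eq_mul_inv, sum_mul]
    _ ≤ 12 * s / (16 * s) := by gcongr
    _ = 12 / 16 := ENNReal.mul_div_mul_right _ _ hs0 hsT
    _ < 1 := ENNReal.div_lt_of_lt_mul (by norm_num)

lemma le_two_rpow_mul_mul_rpow {x E : ℝ≥0∞} {m : ℕ} (hx : x ≤ 2 ^ m) (hE : x⁻¹ ≤ E) :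
    x ≤ 2 ^ ((3 * m : ℝ) / 2) * E * x ^ ((1 : ℝ) / 2) := by
  rcases eq_or_ne x 0 with rfl | hx0
  · exact zero_le
  have hxT : x ≠ ⊤ := ne_top_of_le_ne_top (ENNReal.pow_ne_top ENNReal.ofNat_ne_top) hx
  have h32 : x ^ ((3 : ℝ) / 2) ≤ 2 ^ ((3 * m : ℝ) / 2) := by
    calc x ^ ((3 : ℝ) / 2) ≤ ((2 : ℝ≥0∞) ^ m) ^ ((3 : ℝ) / 2) := by gcongr
      _ = 2 ^ ((3 * m : ℝ) / 2) := by rw [← ENNReal.rpow_natCast, ← ENNReal.rpow_mul]; ring_nf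
  calc x = x ^ ((3 : ℝ) / 2) * x⁻¹ * x ^ ((1 : ℝ) / 2) := by
        rw [mul_right_comm, ← ENNReal.rpow_add _ _ hx0 hxT,
          show (3 : ℝ) / 2 + 1 / 2 = (2 : ℕ) by norm_num, ENNReal.rpow_natCast, pow_two, mul_assoc,
          ENNReal.mul_inv_cancel hx0 hxT, mul_one]
    _ ≤ 2 ^ ((3 * m : ℝ) / 2) * E * x ^ ((1 : ℝ) / 2) := by gcongr

end Numerics

section SphericalAverages

open Set Finset

variable {V : Type*} {G : SimpleGraph V} {r : ℕ}

noncomputable def sphereDensity (G : SimpleGraph V) (r : ℕ) (A : Set V) (x : V) : ℝ≥0∞ :=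
  ((A ∩ {y | G.dist x y = r}).ncard : ℝ≥0∞) / (sphereCard G x r : ℝ≥0∞)

def levelSet (f : V → ℝ) (l : ℝ≥0∞) (n : ℕ) : Set V :=
  {x | (2 : ℝ≥0∞) ^ n / 2 * l ≤ ENNReal.ofReal |f x|}

lemma finite_setOf_le_ofReal_abs {f : V → ℝ} (hf : Summable fun x => |f x|) {t : ℝ≥0∞}
    (ht : t ≠ 0) : {x | t ≤ ENNReal.ofReal |f x|}.Finite := by
  have hlim : Filter.Tendsto (fun x => ENNReal.ofReal |f x|) Filter.cofinite (nhds 0) := by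
    simpa using ENNReal.tendsto_ofReal hf.tendsto_cofinite_zero
  simpa only [not_lt] using
    Filter.eventually_cofinite.mp (hlim.eventually (gt_mem_nhds (pos_iff_ne_zero.mpr ht)))

lemma sphereAvg_eq_sum {x : V} (hx : {y | G.dist x y = r}.Finite) (f : V → ℝ) :
    sphereAvg G f x r = (∑ z ∈ hx.toFinset, ENNReal.ofReal |f z|) / sphereCard G x r := by
  have : Fintype {z // G.dist x z = r} := hx.fintype
  rw [sphereAvg, tsum_fintype, Finset.sum_subtype hx.toFinset (p := fun z => G.dist x z = r)
    (fun _ => hx.mem_toFinset)]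

lemma sphereCard_eq_card {x : V} (hx : {y | G.dist x y = r}.Finite) :
    sphereCard G x r = hx.toFinset.card :=
  ncard_eq_toFinset_card _ hx

lemma sphereCard_pos {x : V} (hx : {y | G.dist x y = r}.Finite)
    (hne : {y | G.dist x y = r}.Nonempty) : 0 < sphereCard G x r :=
  (ncard_pos hx).mpr hne

lemma sphereAvg_ne_top {x : V} (hx : {y | G.dist x y = r}.Finite)
    (hne : {y | G.dist x y = r}.Nonempty) (f : V → ℝ) : sphereAvg G f x r ≠ ⊤ := by
  rw [sphereAvg_eq_sum hx]
  refine ENNReal.div_ne_top (ENNReal.sum_ne_top.mpr fun _ _ => ENNReal.ofReal_ne_top) ?_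
  exact Nat.cast_ne_zero.mpr (sphereCard_pos hx hne).ne'

lemma sum_sphere_le_of_forall_lt {x : V} (hx : {y | G.dist x y = r}.Finite) {f : V → ℝ}
    {l : ℝ≥0∞} {m : ℕ} (hlt : ∀ z ∈ hx.toFinset, ENNReal.ofReal |f z| < 2 ^ m / 2 * l) :
    ∑ z ∈ hx.toFinset, ENNReal.ofReal |f z| ≤
      sphereCard G x r * (l / 2) + ∑ n ∈ range m,
        2 ^ n * (l / 2) * ((levelSet f l n ∩ {y | G.dist x y = r}).ncard : ℝ≥0∞) := by
  classical
  have hhalf (n : ℕ) : (2 : ℝ≥0∞) ^ n / 2 * l = 2 ^ n * (l / 2) := by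
    simp only [div_eq_mul_inv]; ring
  have hcount (n : ℕ) : ((levelSet f l n ∩ {y | G.dist x y = r}).ncard : ℝ≥0∞) =
      ∑ z ∈ hx.toFinset, if z ∈ levelSet f l n then 1 else 0 := by
    rw [sum_boole, ← ncard_coe_finset]
    congr
    ext
    simp [and_comm]
  calc ∑ z ∈ hx.toFinset, ENNReal.ofReal |f z|
      ≤ ∑ z ∈ hx.toFinset, (l / 2 + ∑ n ∈ range m,
          if 2 ^ n * (l / 2) ≤ ENNReal.ofReal |f z| then 2 ^ n * (l / 2) else 0) :=
        sum_le_sum fun z hz => le_add_sum_ite_of_lt_two_pow_mul (hhalf m ▸ hlt z hz)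
    _ = _ := by
        rw [sum_add_distrib, sum_const, nsmul_eq_mul, ← sphereCard_eq_card hx, sum_comm]
        congr 1
        refine sum_congr rfl fun n _ => ?_
        rw [hcount, mul_sum]
        refine sum_congr rfl fun z _ => ?_
        simp only [levelSet, mem_ofPred_eq, hhalf]
        split_ifs <;> simp

lemma setOf_le_sphereAvg_subset (hfin : ∀ x, {y | G.dist x y = r}.Finite)
    (hne : ∀ x, {y | G.dist x y = r}.Nonempty) {f : V → ℝ} {l : ℝ≥0∞} (hl : l ≠ 0)
    (hlT : l ≠ ⊤) {m : ℕ} {w : ℕ → ℝ≥0∞} (hw : ∑ n ∈ range m, 2 ^ n * w n < 1) :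
    {x | l ≤ sphereAvg G f x r} ⊆
      (⋃ z ∈ levelSet f l m, {y | G.dist z y = r}) ∪
        ⋃ n ∈ range m, {x | w n ≤ sphereDensity G r (levelSet f l n) x} := by
  intro x hx
  by_contra hcon
  simp only [mem_union, mem_iUnion, mem_ofPred_eq, not_or, not_exists, not_le] at hcon
  obtain ⟨hbig, hsmall⟩ := hcon
  set N : ℝ≥0∞ := (sphereCard G x r : ℝ≥0∞)
  have hN0 : N ≠ 0 := Nat.cast_ne_zero.mpr (sphereCard_pos (hfin x) (hne x)).ne'
  have hNT : N ≠ ⊤ := ENNReal.natCast_ne_top _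
  have hNl0 : N * (l / 2) ≠ 0 := mul_ne_zero hN0 (ENNReal.div_ne_zero.mpr ⟨hl, by norm_num⟩)
  have hNlT : N * (l / 2) ≠ ⊤ := ENNReal.mul_ne_top hNT (ENNReal.div_ne_top hlT two_ne_zero)
  have hlt : ∀ z ∈ (hfin x).toFinset, ENNReal.ofReal |f z| < 2 ^ m / 2 * l := fun z hz =>
    lt_of_not_ge fun hz' => hbig z hz' (G.dist_comm.trans ((hfin x).mem_toFinset.mp hz))
  have hcnt : ∀ n ∈ range m,
      ((levelSet f l n ∩ {y | G.dist x y = r}).ncard : ℝ≥0∞) ≤ N * w n := fun n hn =>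
    (mul_comm (w n) N ▸ (ENNReal.div_lt_iff (Or.inl hN0) (Or.inl hNT)).mp (hsmall n hn)).le
  have : l * N < l * N :=
    calc l * N ≤ ∑ z ∈ (hfin x).toFinset, ENNReal.ofReal |f z| :=
          (ENNReal.le_div_iff_mul_le (Or.inl hN0) (Or.inl hNT)).mp
            (sphereAvg_eq_sum (hfin x) f ▸ hx)
      _ ≤ N * (l / 2) + ∑ n ∈ range m,
          2 ^ n * (l / 2) * ((levelSet f l n ∩ {y | G.dist x y = r}).ncard : ℝ≥0∞) :=
          sum_sphere_le_of_forall_lt (hfin x) hlt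
      _ ≤ N * (l / 2) + N * (l / 2) * ∑ n ∈ range m, 2 ^ n * w n := by
          rw [mul_sum]
          refine add_le_add le_rfl (sum_le_sum fun n hn => ?_)
          calc 2 ^ n * (l / 2) * _ ≤ 2 ^ n * (l / 2) * (N * w n) := by gcongr; exact hcnt n hn
            _ = N * (l / 2) * (2 ^ n * w n) := by ring
      _ < N * (l / 2) + N * (l / 2) * 1 :=
          ENNReal.add_lt_add_left hNlT (ENNReal.mul_lt_mul_right hNl0 hNlT hw)
      _ = l * N := by rw [mul_one, ← mul_add, ENNReal.add_halves, mul_comm]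
  exact lt_irrefl _ this

lemma sphereCard_le_SG (hbdd : BddAbove (range fun x => sphereCard G x r)) (x : V) :
    sphereCard G x r ≤ SG G r :=
  le_csSup hbdd ⟨x, rfl⟩

lemma SG_pos (hbdd : BddAbove (range fun x => sphereCard G x r)) {x : V}
    (hx : {y | G.dist x y = r}.Finite) (hne : {y | G.dist x y = r}.Nonempty) : 0 < SG G r :=
  (sphereCard_pos hx hne).trans_le (sphereCard_le_SG hbdd x)

lemma encard_biUnion_sphere_le (hfin : ∀ x, {y | G.dist x y = r}.Finite)
    (hbdd : BddAbove (range fun x => sphereCard G x r)) {A : Set V} (hA : A.Finite) :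
    (⋃ z ∈ A, {y | G.dist z y = r}).encard ≤ A.encard * SG G r := by
  calc (⋃ z ∈ A, {y | G.dist z y = r}).encard
      = (⋃ z ∈ hA.toFinset, {y | G.dist z y = r}).encard := by simp
    _ ≤ ∑ z ∈ hA.toFinset, {y | G.dist z y = r}.encard := hA.toFinset.set_encard_biUnion_le _
    _ ≤ ∑ _z ∈ hA.toFinset, (SG G r : ℕ∞) := Finset.sum_le_sum fun z _ => by
        rw [(hfin z).encard_eq_coe_toFinset_card, ← sphereCard_eq_card (hfin z)]
        exact_mod_cast sphereCard_le_SG hbdd z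
    _ = A.encard * SG G r := by simp [hA.encard_eq_coe_toFinset_card]

lemma setOf_le_sphereDensity_subset {A : Set V} {w : ℝ≥0∞} (hw : w ≠ 0) :
    {x | w ≤ sphereDensity G r A x} ⊆ ⋃ z ∈ A, {y | G.dist z y = r} := by
  intro x (hx : w ≤ sphereDensity G r A x)
  have hpos : (A ∩ {y | G.dist x y = r}).ncard ≠ 0 := by
    rintro h
    simp [sphereDensity, h] at hx
    exact hw hx
  obtain ⟨z, hzA, hz⟩ := nonempty_of_ncard_ne_zero hpos
  exact mem_biUnion hzA (G.dist_comm.trans hz)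

lemma inv_SG_le_expander (hbdd : BddAbove (range fun x => sphereCard G x r)) {x : V}
    (hx : {y | G.dist x y = r}.Finite) (hne : {y | G.dist x y = r}.Nonempty) :
    (SG G r : ℝ≥0∞)⁻¹ ≤ expander G r := by
  have hN0 : (sphereCard G x r : ℝ≥0∞) ≠ 0 := Nat.cast_ne_zero.mpr (sphereCard_pos hx hne).ne'
  calc (SG G r : ℝ≥0∞)⁻¹ ≤ (sphereCard G x r : ℝ≥0∞)⁻¹ :=
        ENNReal.inv_le_inv.mpr (by exact_mod_cast sphereCard_le_SG hbdd x)
    _ = (∑ z ∈ {x}, sphereDensity G r (hx.toFinset : Set V) z) ^ 2 /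
          ((hx.toFinset.card : ℝ≥0∞) * (({x} : Finset V).card : ℝ≥0∞)) := by
        rw [sum_singleton, Finset.card_singleton, hx.coe_toFinset, sphereDensity, inter_self,
          ← sphereCard_eq_card hx, show {y | G.dist x y = r}.ncard = sphereCard G x r from rfl,
          ENNReal.div_self hN0 (ENNReal.natCast_ne_top _)]
        simp
    _ ≤ expander G r :=
        le_iSup₂_of_le hx.toFinset (by simpa using hne)
          (le_iSup₂_of_le {x} (singleton_nonempty x) le_rfl)

lemma encard_biUnion_sphere_le_expander (hfin : ∀ x, {y | G.dist x y = r}.Finite)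
    (hbdd : BddAbove (range fun x => sphereCard G x r)) {x₀ : V}
    (hne : {y | G.dist x₀ y = r}.Nonempty) {A : Set V} (hA : A.Finite) {m : ℕ}
    (hm : SG G r ≤ 2 ^ m) :
    ((⋃ z ∈ A, {y | G.dist z y = r}).encard : ℝ≥0∞) ≤
      2 ^ ((3 * m : ℝ) / 2) * expander G r * (SG G r : ℝ≥0∞) ^ ((1 : ℝ) / 2) * A.encard :=
  calc ((⋃ z ∈ A, {y | G.dist z y = r}).encard : ℝ≥0∞)
      ≤ ((A.encard * SG G r : ℕ∞) : ℝ≥0∞) :=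
        ENat.toENNReal_le.2 (encard_biUnion_sphere_le hfin hbdd hA)
    _ = SG G r * A.encard := by simp [mul_comm]
    _ ≤ _ := mul_le_mul_left (le_two_rpow_mul_mul_rpow (by exact_mod_cast hm)
        (inv_SG_le_expander hbdd (hfin x₀) hne)) _

lemma encard_mul_sq_le_expander_mul_encard {A B : Set V} (hA : A.Finite) (hB : B.Finite)
    {w : ℝ≥0∞} (hw : ∀ x ∈ B, w ≤ sphereDensity G r A x) :
    (B.encard : ℝ≥0∞) * w ^ 2 ≤ expander G r * A.encard := by
  rcases B.eq_empty_or_nonempty with rfl | hBne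
  · simp
  rcases A.eq_empty_or_nonempty with rfl | hAne
  · obtain ⟨x, hx⟩ := hBne
    have hw0 : w = 0 := by simpa [sphereDensity] using hw x hx
    simp [hw0]
  set a : ℝ≥0∞ := (hA.toFinset.card : ℝ≥0∞)
  set b : ℝ≥0∞ := (hB.toFinset.card : ℝ≥0∞)
  have hb0 : b ≠ 0 := by simpa [b] using hBne.ne_empty
  have hbT : b ≠ ⊤ := ENNReal.natCast_ne_top _
  have hsum : b * w ≤ ∑ x ∈ hB.toFinset, sphereDensity G r A x := by
    simpa [b] using Finset.card_nsmul_le_sum _ _ w fun x hx => hw x (hB.mem_toFinset.mp hx)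
  have hE : (∑ x ∈ hB.toFinset, sphereDensity G r (hA.toFinset : Set V) x) ^ 2 / (a * b) ≤
      expander G r :=
    le_iSup₂_of_le hA.toFinset (by simpa using hAne)
      (le_iSup₂_of_le hB.toFinset (by simpa using hBne) le_rfl)
  rw [hA.coe_toFinset] at hE
  have hsq : b * (b * w ^ 2) ≤ b * (expander G r * a) :=
    calc b * (b * w ^ 2) = (b * w) ^ 2 := by ring
      _ ≤ (∑ x ∈ hB.toFinset, sphereDensity G r A x) ^ 2 := by gcongr
      _ ≤ expander G r * (a * b) :=
        (ENNReal.div_le_iff_le_mul (Or.inl (mul_ne_zero (by simpa [a] using hAne.ne_empty) hb0))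
          (Or.inl (ENNReal.mul_ne_top (ENNReal.natCast_ne_top _) hbT))).mp hE
      _ = b * (expander G r * a) := by ring
  rw [hA.encard_eq_coe_toFinset_card, hB.encard_eq_coe_toFinset_card]
  exact (ENNReal.mul_le_mul_iff_right hb0 hbT).mp hsq

lemma encard_setOf_inv_le_sphereDensity_le (hfin : ∀ x, {y | G.dist x y = r}.Finite)
    {A : Set V} (hA : A.Finite) {u : ℝ≥0∞} (hu0 : u ≠ 0) (huT : u ≠ ⊤) :
    (({x | u⁻¹ ≤ sphereDensity G r A x}).encard : ℝ≥0∞) ≤ expander G r * A.encard * u ^ 2 := by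
  set B := {x | u⁻¹ ≤ sphereDensity G r A x}
  have hB : B.Finite := (hA.biUnion fun z _ => hfin z).subset
    (setOf_le_sphereDensity_subset (ENNReal.inv_ne_zero.mpr huT))
  calc (B.encard : ℝ≥0∞) = B.encard * u⁻¹ ^ 2 * u ^ 2 := by
        rw [mul_assoc, ← mul_pow, ENNReal.inv_mul_cancel hu0 huT, one_pow, mul_one]
    _ ≤ expander G r * A.encard * u ^ 2 :=
        mul_le_mul_left (encard_mul_sq_le_expander_mul_encard hA hB fun x hx => hx) _

theorem encard_setOf_le_sphereAvg_le [Nonempty V] (hfin : ∀ x, {y | G.dist x y = r}.Finite)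
    (hne : ∀ x, {y | G.dist x y = r}.Nonempty) (hbdd : BddAbove (range fun x => sphereCard G x r))
    {f : V → ℝ} (hf : Summable fun x => |f x|) {l : ℝ≥0∞} (hl : l ≠ 0) (hlT : l ≠ ⊤) :
    (({x | l ≤ sphereAvg G f x r}).encard : ℝ≥0∞) ≤
      256 * ∑ n ∈ Finset.range (Nat.log 2 (2 * SG G r) + 1),
        2 ^ ((3 * n : ℝ) / 2) * expander G r * (SG G r : ℝ≥0∞) ^ ((1 : ℝ) / 2) *
          ((levelSet f l n).encard : ℝ≥0∞) := by
  set S := SG G r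
  set m := Nat.log 2 (2 * S)
  set T : ℕ → ℝ≥0∞ := fun n => 2 ^ ((3 * n : ℝ) / 2) * expander G r *
    (S : ℝ≥0∞) ^ ((1 : ℝ) / 2) * ((levelSet f l n).encard : ℝ≥0∞)
  obtain ⟨x₀⟩ := ‹Nonempty V›
  have hS : 0 < S := SG_pos hbdd (hfin x₀) (hne x₀)
  have hS0 : (S : ℝ≥0∞) ≠ 0 := Nat.cast_ne_zero.mpr hS.ne'
  have hSm : S ≤ 2 ^ m := by
    have h : 2 * S < 2 ^ (m + 1) := Nat.lt_pow_succ_log_self one_lt_two _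
    rw [pow_succ] at h
    omega
  have hmS : 2 ^ m ≤ 2 * S := Nat.pow_log_le_self 2 (by omega)
  have hL (n : ℕ) : (levelSet f l n).Finite :=
    finite_setOf_le_ofReal_abs hf (mul_ne_zero (by simp) hl)
  have hw := sum_two_pow_mul_inv_dyadicWeight_lt_one hS0 (ENNReal.natCast_ne_top S)
    (m := m) (by exact_mod_cast hmS)
  have hU : ((⋃ z ∈ levelSet f l m, {y | G.dist z y = r}).encard : ℝ≥0∞) ≤ 256 * T m :=
    (encard_biUnion_sphere_le_expander hfin hbdd (hne x₀) (hL m) hSm).trans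
      (le_mul_of_one_le_left zero_le (by norm_num))
  have hB (n : ℕ) : (({x | (dyadicWeight S n)⁻¹ ≤ sphereDensity G r (levelSet f l n) x}).encard
      : ℝ≥0∞) ≤ 256 * T n :=
    calc _ ≤ expander G r * (levelSet f l n).encard * dyadicWeight S n ^ 2 :=
          encard_setOf_inv_le_sphereDensity_le hfin (hL n) (dyadicWeight_ne_zero hS0 n)
            (dyadicWeight_ne_top (ENNReal.natCast_ne_top S) n)
      _ = 256 * T n := by rw [dyadicWeight_sq]; ring
  calc (({x | l ≤ sphereAvg G f x r}).encard : ℝ≥0∞)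
      ≤ (((⋃ z ∈ levelSet f l m, {y | G.dist z y = r}) ∪ ⋃ n ∈ Finset.range m,
          {x | (dyadicWeight S n)⁻¹ ≤ sphereDensity G r (levelSet f l n) x}).encard : ℝ≥0∞) :=
        ENat.toENNReal_mono (encard_le_encard (setOf_le_sphereAvg_subset hfin hne hl hlT hw))
    _ ≤ ((⋃ z ∈ levelSet f l m, {y | G.dist z y = r}).encard : ℝ≥0∞) + ∑ n ∈ Finset.range m,
          (({x | (dyadicWeight S n)⁻¹ ≤ sphereDensity G r (levelSet f l n) x}).encard : ℝ≥0∞) :=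
        encard_union_biUnion_le _ _ _
    _ ≤ 256 * T m + ∑ n ∈ Finset.range m, 256 * T n :=
        add_le_add hU (Finset.sum_le_sum fun n _ => hB n)
    _ = 256 * ∑ n ∈ Finset.range (m + 1), T n := by
        rw [Finset.sum_range_succ, mul_add, Finset.mul_sum, add_comm]

end SphericalAverages

theorem stmt19 {V : Type*} (G : SimpleGraph V) (hconn : G.Connected)
    (hloc : ∀ x : V, (G.neighborSet x).Finite) (hV : Infinite V)
    (hS : ∀ r : ℕ, ∃ C : ℕ, ∀ x : V, sphereCard G x r ≤ C) :
    ∃ c : ℝ≥0∞, c ≠ ⊤ ∧ ∀ (f : V → ℝ), Summable (fun x => |f x|) →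
      ∀ r : ℕ, 1 ≤ r → ∀ l : ℝ≥0∞, 0 < l →
        (({x : V | l ≤ sphereAvg G f x r}).encard : ℝ≥0∞) ≤
          c * ∑' n : {n : ℕ // 2 ^ n ≤ 2 * SG G r},
            (2 : ℝ≥0∞) ^ ((3 * (n : ℕ) : ℝ) / 2) * expander G r *
              (SG G r : ℝ≥0∞) ^ ((1 : ℝ) / 2) *
              (({x : V | (2 : ℝ≥0∞) ^ (n : ℕ) / 2 * l ≤ ENNReal.ofReal |f x|}).encard :
                ℝ≥0∞) := by
  have hfin := hconn.finite_setOf_dist_eq hloc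
  have hne := hconn.nonempty_setOf_dist_eq hloc
  refine ⟨256, by norm_num, fun f hf r _ l hl => ?_⟩
  obtain ⟨C, hC⟩ := hS r
  have hbdd : BddAbove (Set.range fun x => sphereCard G x r) := ⟨C, Set.forall_mem_range.mpr hC⟩
  rcases eq_or_ne l ⊤ with rfl | hlT
  · simp [sphereAvg_ne_top (hfin r _) (hne r _)]
  obtain ⟨x₀⟩ := hV.nonempty
  calc _ ≤ _ := encard_setOf_le_sphereAvg_le (hfin r) (hne r) hbdd hf hl.ne' hlT
    _ ≤ _ := mul_le_mul_right (sum_range_succ_log_le_tsum _ _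
        (mul_ne_zero two_ne_zero (SG_pos hbdd (hfin r x₀) (hne r x₀)).ne')) _
end
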